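/- arXiv:2306.13111 — 8 statements merged into one kernel-verified Lean document; each statement's English description precedes it below -/
import Mathlib

section
/- Let d, D be positive integers and let a_1, …, a_D ∈ ℝ^d be the columns of a matrix A ∈ ℝ^{d×D}. If A is a phase retrievable frame (i.e., the map α_A(x) = (|⟨x, a_k⟩|)_{k=1}^D satisfies: α_A(x) = α_A(y) implies x = y or x = −y), then A is a universal key for ℝ^{2×d}: for any X, Y ∈ ℝ^{2×d}, β_A(X) = β_A(Y) implies X = Y or X = P·Y where P is the 2×2 permutation matrix exchanging the two rows. -/
open scoped BigOperators

namespace PR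

noncomputable section

/-- Euclidean inner product on `ℝ^d`. -/
def dot {d : ℕ} (x y : Fin d → ℝ) : ℝ := ∑ i, x i * y i

/-- The `k`-th column of `A`. -/
def col {d D : ℕ} (A : Matrix (Fin d) (Fin D) ℝ) (k : Fin D) : Fin d → ℝ := fun i => A i k

/-- Analysis operator `T_A(x)_k = ⟨x, a_k⟩`. -/
def TA {d D : ℕ} (A : Matrix (Fin d) (Fin D) ℝ) (x : Fin d → ℝ) : Fin D → ℝ :=
  fun k => dot x (col A k)

/-- Phase-retrieval map `α_A(x)_k = |⟨x, a_k⟩|`. -/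
def alpha {d D : ℕ} (A : Matrix (Fin d) (Fin D) ℝ) (x : Fin d → ℝ) : Fin D → ℝ :=
  fun k => |dot x (col A k)|

/-- Sorting encoder `β_A(X)`: its `k`-th column is the decreasingly sorted pair
`(max(⟨x₁,a_k⟩,⟨x₂,a_k⟩), min(⟨x₁,a_k⟩,⟨x₂,a_k⟩))`. -/
def beta {d D : ℕ} (A : Matrix (Fin d) (Fin D) ℝ) (X : Matrix (Fin 2) (Fin d) ℝ) :
    Matrix (Fin 2) (Fin D) ℝ :=
  Matrix.of fun j k =>
    if j = 0 then max (dot (X 0) (col A k)) (dot (X 1) (col A k))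
    else min (dot (X 0) (col A k)) (dot (X 1) (col A k))

/-- The 2×2 permutation matrix exchanging the two rows. -/
def P : Matrix (Fin 2) (Fin 2) ℝ := Matrix.of ![![0, 1], ![1, 0]]

/-- Euclidean norm on `ℝ^n`. -/
def vnorm {n : ℕ} (x : Fin n → ℝ) : ℝ := Real.sqrt (∑ i, (x i) ^ 2)

/-- Frobenius norm on `ℝ^{2×n}`. -/
def fnorm {n : ℕ} (X : Matrix (Fin 2) (Fin n) ℝ) : ℝ := Real.sqrt (∑ i, ∑ j, (X i j) ^ 2)

/-- Operator norm of `T_A` (largest singular value of `A`): supremum of `‖T_A x‖`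
over unit vectors `x`. -/
def sigma1 {d D : ℕ} (A : Matrix (Fin d) (Fin D) ℝ) : ℝ :=
  sSup {c : ℝ | ∃ x : Fin d → ℝ, vnorm x = 1 ∧ c = vnorm (TA A x)}

/-- `λ(I) = inf { Σ_{i∈I} ⟨u, a_i⟩² : ‖u‖ = 1 }`, the square of the `d`-th singular value
of the submatrix `A[I]`. -/
def lam {d D : ℕ} (A : Matrix (Fin d) (Fin D) ℝ) (I : Finset (Fin D)) : ℝ :=
  sInf {c : ℝ | ∃ u : Fin d → ℝ, vnorm u = 1 ∧ c = ∑ i ∈ I, (dot u (col A i)) ^ 2}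

/-- `A₀² = min_I (λ(I) + λ(Iᶜ))`. -/
def A0sq {d D : ℕ} (A : Matrix (Fin d) (Fin D) ℝ) : ℝ :=
  sInf {c : ℝ | ∃ I : Finset (Fin D), c = lam A I + lam A Iᶜ}

/-- phase retrievability implies the universal key property (n = 2). -/
theorem phase_retrievable_implies_universal_key
    {d D : ℕ} (hd : 0 < d) (hD : 0 < D) (A : Matrix (Fin d) (Fin D) ℝ)
    (hPR : ∀ x y : Fin d → ℝ, alpha A x = alpha A y → x = y ∨ x = -y) :
    ∀ X Y : Matrix (Fin 2) (Fin d) ℝ, beta A X = beta A Y → X = Y ∨ X = P * Y := by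
  have dot_add : ∀ (u v : Fin d → ℝ) (k : Fin D),
      dot (u + v) (col A k) = dot u (col A k) + dot v (col A k) := by
    intro u v k; simp [dot, add_mul, Finset.sum_add_distrib]
  have dot_sub : ∀ (u v : Fin d → ℝ) (k : Fin D),
      dot (u - v) (col A k) = dot u (col A k) - dot v (col A k) := by
    intro u v k; simp [dot, sub_mul, Finset.sum_sub_distrib]
  have dot_neg : ∀ (v : Fin d → ℝ) (k : Fin D),
      dot (-v) (col A k) = - dot v (col A k) := by
    intro v k; simp [dot, neg_mul, Finset.sum_neg_distrib]
  have TAinj : ∀ u v : Fin d → ℝ, TA A u = TA A v → u = v := by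
    intro u v h
    have ha : alpha A u = alpha A v := funext fun k =>
      congrArg abs (congrFun h k)
    rcases hPR u v ha with h' | h'
    · exact h'
    · subst h'
      have hz : ∀ k, dot v (col A k) = 0 := by
        intro k
        have h2 := congrFun h k
        simp only [TA, dot_neg] at h2
        linarith
      have h0 : alpha A v = alpha A 0 := funext fun k => by
        have hz0 : dot (0 : Fin d → ℝ) (col A k) = 0 := by simp [dot]
        simp [alpha, hz k, hz0]
      rcases hPR v 0 h0 with hv | hv <;> simp [hv]
  intro X Y hXY
  have hmax : ∀ k, max (dot (X 0) (col A k)) (dot (X 1) (col A k))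
      = max (dot (Y 0) (col A k)) (dot (Y 1) (col A k)) := by
    intro k
    have := congrFun (congrFun hXY 0) k
    simpa [beta] using this
  have hmin : ∀ k, min (dot (X 0) (col A k)) (dot (X 1) (col A k))
      = min (dot (Y 0) (col A k)) (dot (Y 1) (col A k)) := by
    intro k
    have := congrFun (congrFun hXY 1) k
    simpa [beta] using this
  have hsum : X 0 + X 1 = Y 0 + Y 1 := by
    apply TAinj
    funext k
    have h1 := hmax k
    have h2 := hmin k
    have e1 := max_add_min (dot (X 0) (col A k)) (dot (X 1) (col A k))
    have e2 := max_add_min (dot (Y 0) (col A k)) (dot (Y 1) (col A k))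
    simp only [TA, dot_add]
    linarith
  have hdiff : alpha A (X 0 - X 1) = alpha A (Y 0 - Y 1) := by
    funext k
    have h1 := hmax k
    have h2 := hmin k
    have key : ∀ a b : ℝ, |a - b| = max a b - min a b := by
      intro a b
      rcases le_total a b with h | h
      · rw [abs_of_nonpos (by linarith), max_eq_right h, min_eq_left h]; ring
      · rw [abs_of_nonneg (by linarith), max_eq_left h, min_eq_right h]
    simp only [alpha, dot_sub]
    rw [key, key, h1, h2]
  rcases hPR _ _ hdiff with hcase | hcase
  · left
    have h0 : X 0 = Y 0 := by
      funext i
      have a1 := congrFun hsum i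
      have a2 := congrFun hcase i
      simp only [Pi.add_apply, Pi.sub_apply] at a1 a2
      linarith
    have h1 : X 1 = Y 1 := by
      funext i
      have a1 := congrFun hsum i
      have a2 := congrFun hcase i
      simp only [Pi.add_apply, Pi.sub_apply] at a1 a2
      linarith
    funext i j
    fin_cases i
    · exact congrFun h0 j
    · exact congrFun h1 j
  · right
    have h0 : X 0 = Y 1 := by
      funext i
      have a1 := congrFun hsum i
      have a2 := congrFun hcase i
      simp only [Pi.add_apply, Pi.sub_apply, Pi.neg_apply] at a1 a2
      linarith
    have h1 : X 1 = Y 0 := by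
      funext i
      have a1 := congrFun hsum i
      have a2 := congrFun hcase i
      simp only [Pi.add_apply, Pi.sub_apply, Pi.neg_apply] at a1 a2
      linarith
    funext i j
    fin_cases i
    · simpa [P, Matrix.mul_apply, Fin.sum_univ_two] using congrFun h0 j
    · simpa [P, Matrix.mul_apply, Fin.sum_univ_two] using congrFun h1 j

end

end PR
end

section
/- Let d, D be positive integers and let a_1, …, a_D ∈ ℝ^d be the columns of a matrix A ∈ ℝ^{d×D}. If A is a universal key for ℝ^{2×d} (i.e., for any X, Y ∈ ℝ^{2×d}, β_A(X) = β_A(Y) implies X = Y or X = P·Y where P exchanges the two rows), then A is a phase retrievable frame: α_A(x) = α_A(y) implies x = y or x = −y, for all x, y ∈ ℝ^d. -/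
open scoped BigOperators

namespace PR

noncomputable section

/-- the universal key property implies phase retrievability (n = 2). -/
theorem universal_key_implies_phase_retrievable
    {d D : ℕ} (hd : 0 < d) (hD : 0 < D) (A : Matrix (Fin d) (Fin D) ℝ)
    (hUK : ∀ X Y : Matrix (Fin 2) (Fin d) ℝ, beta A X = beta A Y → X = Y ∨ X = P * Y) :
    ∀ x y : Fin d → ℝ, alpha A x = alpha A y → x = y ∨ x = -y := by
  intro x y hxy
  set X : Matrix (Fin 2) (Fin d) ℝ := Matrix.of ![x, -x] with hX
  set Y : Matrix (Fin 2) (Fin d) ℝ := Matrix.of ![y, -y] with hY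
  have hdotX : ∀ k, dot (X 1) (col A k) = -(dot (X 0) (col A k)) := by
    intro k
    simp [hX, dot, Finset.sum_neg_distrib, neg_mul]
  have hdotY : ∀ k, dot (Y 1) (col A k) = -(dot (Y 0) (col A k)) := by
    intro k
    simp [hY, dot, Finset.sum_neg_distrib, neg_mul]
  have hX0 : X 0 = x := rfl
  have hY0 : Y 0 = y := rfl
  have habs : ∀ k, |dot x (col A k)| = |dot y (col A k)| := fun k => congrFun hxy k
  have hb : beta A X = beta A Y := by
    ext j k
    have h1 : max (dot (X 0) (col A k)) (dot (X 1) (col A k)) = |dot x (col A k)| := by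
      rw [hdotX k, hX0]
      exact (abs_eq_max_neg (a := dot x (col A k))).symm
    have h2 : max (dot (Y 0) (col A k)) (dot (Y 1) (col A k)) = |dot y (col A k)| := by
      rw [hdotY k, hY0]
      exact (abs_eq_max_neg (a := dot y (col A k))).symm
    have h3 : min (dot (X 0) (col A k)) (dot (X 1) (col A k)) = -|dot x (col A k)| := by
      rw [hdotX k, hX0]
      rcases le_total (dot x (col A k)) 0 with h | h
      · rw [min_eq_left (by linarith), abs_of_nonpos h, neg_neg]
      · rw [min_eq_right (by linarith), abs_of_nonneg h]
    have h4 : min (dot (Y 0) (col A k)) (dot (Y 1) (col A k)) = -|dot y (col A k)| := by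
      rw [hdotY k, hY0]
      rcases le_total (dot y (col A k)) 0 with h | h
      · rw [min_eq_left (by linarith), abs_of_nonpos h, neg_neg]
      · rw [min_eq_right (by linarith), abs_of_nonneg h]
    by_cases hj : j = 0
    · simp only [beta, Matrix.of_apply, hj, if_pos rfl, h1, h2, habs k]
      simp
    · simp only [beta, Matrix.of_apply, if_neg hj, h3, h4, habs k]
  rcases hUK X Y hb with h | h
  · left
    have := congrFun h 0
    rw [hX0, hY0] at this
    exact this
  · right
    have := congrFun (congrFun h 0)
    ext i
    have hi := this i
    have : (P * Y) 0 i = -(y i) := by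
      simp [P, Matrix.mul_apply, Fin.sum_univ_two, hY, Matrix.of_apply]
    rw [this] at hi
    exact hi

end

end PR
end

section
/- Let d, D be positive integers and let A ∈ ℝ^{d×D} with columns a_1, …, a_D ∈ ℝ^d. If A is a universal key for ℝ^{2×d} (i.e., β_A(X) = β_A(Y) implies X = Y or X equals Y with rows exchanged), then D ≥ 2d − 1. -/
open scoped BigOperators

namespace PR

noncomputable section

lemma exists_ker {d D : ℕ} (A : Matrix (Fin d) (Fin D) ℝ)
    (I : Finset (Fin D)) (hI : I.card < d) :
    ∃ u : Fin d → ℝ, u ≠ 0 ∧ ∀ i ∈ I, dot u (col A i) = 0 := by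
  classical
  let f : (Fin d → ℝ) →ₗ[ℝ] (I → ℝ) :=
    { toFun := fun u i => dot u (col A i.1)
      map_add' := by
        intro u v; funext i
        simp [dot, add_mul, Finset.sum_add_distrib]
      map_smul' := by
        intro c u; funext i
        simp [dot, Finset.mul_sum, mul_assoc] }
  have hninj : ¬ Function.Injective f := by
    intro h
    have h2 := LinearMap.finrank_le_finrank_of_injective h
    rw [Module.finrank_fin_fun, Module.finrank_pi] at h2
    simp [Fintype.card_coe] at h2
    omega
  have hker : LinearMap.ker f ≠ ⊥ := fun h => hninj (LinearMap.ker_eq_bot.mp h)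
  obtain ⟨u, hu, hune⟩ := Submodule.ne_bot_iff _ |>.mp hker
  refine ⟨u, hune, fun i hi => ?_⟩
  have := congrFun (LinearMap.mem_ker.mp hu) ⟨i, hi⟩
  simpa [f] using this

lemma dot_add {d : ℕ} (u v a : Fin d → ℝ) : dot (u + v) a = dot u a + dot v a := by
  simp [dot, add_mul, Finset.sum_add_distrib]

lemma dot_sub {d : ℕ} (u v a : Fin d → ℝ) : dot (u - v) a = dot u a - dot v a := by
  simp [dot, sub_mul, Finset.sum_sub_distrib]

lemma dot_neg {d : ℕ} (u a : Fin d → ℝ) : dot (-u) a = - dot u a := by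
  simp [dot, Finset.sum_neg_distrib]


/-- if `A` is a universal key for `ℝ^{2×d}` then `D ≥ 2d - 1`. -/
theorem universal_key_lower_bound_on_D
    {d D : ℕ} (hd : 0 < d) (hD : 0 < D) (A : Matrix (Fin d) (Fin D) ℝ)
    (hUK : ∀ X Y : Matrix (Fin 2) (Fin d) ℝ, beta A X = beta A Y → X = Y ∨ X = P * Y) :
    D ≥ 2 * d - 1 := by
  classical
  by_contra hlt
  push_neg at hlt
  have hD2 : D ≤ 2 * d - 2 := by omega
  obtain ⟨I, -, hIcard⟩ := Finset.exists_subset_card_eq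
    (s := (Finset.univ : Finset (Fin D))) (n := min D (d - 1))
    (by simp)
  have hIc : Iᶜ.card = D - I.card := by
    rw [Finset.card_compl]; simp
  have hI1 : I.card < d := by omega
  have hI2 : Iᶜ.card < d := by omega
  obtain ⟨u, hu, hudot⟩ := exists_ker A I hI1
  obtain ⟨v, hv, hvdot⟩ := exists_ker A Iᶜ hI2
  set x := u + v with hx
  set y := u - v with hy
  set X : Matrix (Fin 2) (Fin d) ℝ := Matrix.of ![x, -x] with hX
  set Y : Matrix (Fin 2) (Fin d) ℝ := Matrix.of ![y, -y] with hY
  have habs : ∀ k, |dot x (col A k)| = |dot y (col A k)| := by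
    intro k
    by_cases hk : k ∈ I
    · have h0 := hudot k hk
      rw [hx, hy, dot_add, dot_sub, h0]
      simp [abs_sub_comm]
    · have h0 := hvdot k (Finset.mem_compl.mpr hk)
      rw [hx, hy, dot_add, dot_sub, h0]
      simp
  have hbeta : beta A X = beta A Y := by
    funext j k
    have hX0 : X 0 = x := rfl
    have hX1 : X 1 = -x := rfl
    have hY0 : Y 0 = y := rfl
    have hY1 : Y 1 = -y := rfl
    simp only [beta, Matrix.of_apply, hX0, hX1, hY0, hY1, dot_neg]
    have hmax : ∀ a : ℝ, max a (-a) = |a| := fun a => (abs_eq_max_neg).symm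
    have hmin : ∀ a : ℝ, min a (-a) = -|a| := by
      intro a
      rcases le_total a 0 with h | h
      · rw [min_eq_left (by linarith), abs_of_nonpos h]; ring
      · rw [min_eq_right (by linarith), abs_of_nonneg h]
    split
    · rw [hmax, hmax, habs k]
    · rw [hmin, hmin, habs k]
  rcases hUK X Y hbeta with hXY | hXY
  · apply hv
    funext k
    have := congrFun (congrFun hXY 0) k
    have hxk : x k = y k := this
    have : u k + v k = u k - v k := hxk
    have : v k = 0 := by linarith
    simpa using this
  · apply hu
    funext k
    have h1 := congrFun (congrFun hXY 0) k
    have hPY : (P * Y) 0 k = - y k := by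
      simp [P, Matrix.mul_apply, Fin.sum_univ_two, hY]
    rw [hPY] at h1
    have hxk : x k = - y k := h1
    have : u k + v k = -(u k - v k) := hxk
    have : u k = 0 := by linarith
    simpa using this

end

end PR
end

section
/- Let d ≥ 1 and D = 2d − 1, and let A ∈ ℝ^{d×D} with columns a_1, …, a_D ∈ ℝ^d. Then A is a universal key for ℝ^{2×d} (i.e., β_A(X) = β_A(Y) implies X = Y or X equals Y with rows exchanged) if and only if A is full spark, meaning every subset of d of its columns is linearly independent. -/
open scoped BigOperators

namespace PR

noncomputable section

/-!
Since `max` and `min` of a pair are recovered from its sum and the absolute value of its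
difference, `β_A(X)` amounts to `T_A(x₁ + x₂)` together with `α_A(x₁ - x₂)`. Hence `A` is a
universal key exactly when it does phase retrieval (`α_A(x) = α_A(y)` forces `x = ±y`); the
injectivity of `T_A` needed for the sums comes for free, as `T_A(x - y) = 0` gives
`α_A(x - y) = α_A(0)`.

For `D = 2d - 1` phase retrieval is equivalent to full spark. If `α_A(x) = α_A(y)`, then
`⟨x - y, a_k⟩ = 0` or `⟨x + y, a_k⟩ = 0` for each `k`, so one of the two holds on at least `d`
columns, which span `ℝ^d`. Conversely, if `u ≠ 0` is orthogonal to the columns in `S` and `v ≠ 0`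
to those outside `S`, then `α_A(u + v) = α_A(u - v)`; so of any `d` columns either those or the
remaining `d - 1` ones span `ℝ^d`, and it can only be the former.
-/

section DotProduct

open Submodule

variable {K n ι : Type*} [Field K] [Fintype n] [DecidableEq n]

theorem span_range_eq_top_iff_forall_dotProduct (f : ι → n → K) :
    span K (Set.range f) = ⊤ ↔ ∀ v : n → K, (∀ k, v ⬝ᵥ f k = 0) → v = 0 := by
  constructor
  · intro hf v hv
    have hle : span K (Set.range f) ≤ LinearMap.ker (dotProductEquiv K n v) :=
      span_le.2 (Set.range_subset_iff.2 hv)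
    exact dotProduct_eq_zero v fun w => hle (hf ▸ mem_top)
  · intro hf
    by_contra hne
    obtain ⟨φ, hφ, hle⟩ :=
      (span K (Set.range f)).exists_le_ker_of_lt_top (lt_top_iff_ne_top.2 hne)
    rw [← (dotProductEquiv K n).apply_symm_apply φ] at hφ hle
    exact hφ (by rw [hf _ fun k => hle (subset_span ⟨k, rfl⟩), map_zero])

theorem LinearIndependent.eq_zero_of_forall_dotProduct_eq_zero [Fintype ι] {f : ι → n → K}
    (hf : LinearIndependent K f) (hcard : Fintype.card ι = Fintype.card n) {v : n → K}
    (hv : ∀ k, v ⬝ᵥ f k = 0) : v = 0 :=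
  (span_range_eq_top_iff_forall_dotProduct f).1
    (hf.span_eq_top_of_card_eq_finrank' (by simpa using hcard)) v hv

theorem linearIndependent_of_forall_dotProduct_eq_zero [Fintype ι] {f : ι → n → K}
    (hcard : Fintype.card ι = Fintype.card n)
    (hf : ∀ v : n → K, (∀ k, v ⬝ᵥ f k = 0) → v = 0) : LinearIndependent K f :=
  linearIndependent_of_top_le_span_of_card_eq_finrank
    ((span_range_eq_top_iff_forall_dotProduct f).2 hf).ge (by simpa using hcard)

theorem exists_ne_zero_forall_dotProduct_eq_zero_of_card_lt [Fintype ι] (f : ι → n → K)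
    (hcard : Fintype.card ι < Fintype.card n) : ∃ v : n → K, v ≠ 0 ∧ ∀ k, v ⬝ᵥ f k = 0 := by
  by_contra! h
  have htop : span K (Set.range f) = ⊤ :=
    (span_range_eq_top_iff_forall_dotProduct f).2 fun v hv =>
      by_contra fun hv0 => (h v hv0).elim fun k hk => hk (hv k)
  have := finrank_range_le_card (R := K) f
  rw [Set.finrank, htop, finrank_top, Module.finrank_fintype_fun_eq_card] at this
  omega

end DotProduct

theorem max_eq_max_and_min_eq_min_iff {a b c d : ℝ} :
    max a b = max c d ∧ min a b = min c d ↔ a + b = c + d ∧ |a - b| = |c - d| := by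
  rw [← max_add_min a b, ← max_add_min c d, ← max_sub_min_eq_abs' a b,
    ← max_sub_min_eq_abs' c d]
  constructor
  · rintro ⟨hmax, hmin⟩
    rw [hmax, hmin]
    exact ⟨rfl, rfl⟩
  · rintro ⟨hsum, hdiff⟩
    constructor <;> linarith

theorem P_mul_row_zero {d : ℕ} (Y : Matrix (Fin 2) (Fin d) ℝ) : (P * Y) 0 = Y 1 := by
  ext j
  simp [P, Matrix.mul_apply]

theorem P_mul_row_one {d : ℕ} (Y : Matrix (Fin 2) (Fin d) ℝ) : (P * Y) 1 = Y 0 := by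
  ext j
  simp [P, Matrix.mul_apply]

theorem eq_of_add_rows_eq_of_sub_rows_eq {d : ℕ} {X Y : Matrix (Fin 2) (Fin d) ℝ}
    (hsum : X 0 + X 1 = Y 0 + Y 1) (hdiff : X 0 - X 1 = Y 0 - Y 1) : X = Y := by
  ext i j
  have hs := congrFun hsum j
  have hd := congrFun hdiff j
  simp only [Pi.add_apply, Pi.sub_apply] at hs hd
  fin_cases i
  · show X 0 j = Y 0 j
    linarith
  · show X 1 j = Y 1 j
    linarith

section Frame

open Matrix

variable {d D : ℕ} (A : Matrix (Fin d) (Fin D) ℝ)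

theorem dot_col (x : Fin d → ℝ) (k : Fin D) : dot x (col A k) = TA A x k := rfl

theorem TA_zero : TA A 0 = 0 := zero_vecMul A

theorem TA_add (x y : Fin d → ℝ) : TA A (x + y) = TA A x + TA A y := add_vecMul A x y

theorem TA_sub (x y : Fin d → ℝ) : TA A (x - y) = TA A x - TA A y := sub_vecMul A x y

theorem alpha_eq_abs_TA (x : Fin d → ℝ) : alpha A x = |TA A x| := rfl

def IsUniversalKey : Prop :=
  ∀ X Y : Matrix (Fin 2) (Fin d) ℝ, beta A X = beta A Y → X = Y ∨ X = P * Y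

def DoesPhaseRetrieval : Prop :=
  ∀ x y : Fin d → ℝ, alpha A x = alpha A y → x = y ∨ x = -y

/-- The columns `a_k`, `k ∈ S`, span `ℝ^d`: only `0` is orthogonal to all of them. -/
def ColumnsSpan (S : Finset (Fin D)) : Prop :=
  ∀ x : Fin d → ℝ, (∀ k ∈ S, TA A x k = 0) → x = 0

def HasComplementProperty : Prop :=
  ∀ S : Finset (Fin D), ColumnsSpan A S ∨ ColumnsSpan A Sᶜ

def IsFullSpark : Prop :=
  ∀ S : Finset (Fin D), S.card = d → LinearIndependent ℝ (fun i : S => col A (i : Fin D))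

variable {A}

theorem beta_eq_beta_iff {X Y : Matrix (Fin 2) (Fin d) ℝ} :
    beta A X = beta A Y ↔
      TA A (X 0 + X 1) = TA A (Y 0 + Y 1) ∧ alpha A (X 0 - X 1) = alpha A (Y 0 - Y 1) := by
  simp only [← Matrix.ext_iff, Fin.forall_fin_two, beta, Matrix.of_apply, funext_iff,
    alpha_eq_abs_TA, TA_add, TA_sub, dot_col, if_true, one_ne_zero,
    if_false, Pi.add_apply, Pi.sub_apply, Pi.abs_apply, ← forall_and,
    max_eq_max_and_min_eq_min_iff]

theorem DoesPhaseRetrieval.TA_injective (hA : DoesPhaseRetrieval A) :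
    Function.Injective (TA A) := by
  intro x y hxy
  have hzero : alpha A (x - y) = alpha A 0 := by
    rw [alpha_eq_abs_TA, alpha_eq_abs_TA, TA_sub, hxy, sub_self, TA_zero]
  rcases hA _ _ hzero with h | h <;> simpa [sub_eq_zero] using h

theorem isUniversalKey_iff_doesPhaseRetrieval : IsUniversalKey A ↔ DoesPhaseRetrieval A := by
  constructor
  · intro hA x y hxy
    have hbeta : beta A (Matrix.of ![x, -x]) = beta A (Matrix.of ![y, -y]) := by
      refine beta_eq_beta_iff.2 ⟨?_, ?_⟩
      · show TA A (x + -x) = TA A (y + -y)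
        rw [add_neg_cancel, add_neg_cancel]
      show alpha A (x - -x) = alpha A (y - -y)
      simp only [funext_iff, alpha_eq_abs_TA, Pi.abs_apply] at hxy ⊢
      intro k
      rw [sub_neg_eq_add, sub_neg_eq_add, TA_add, TA_add, Pi.add_apply, Pi.add_apply, ← two_mul,
        ← two_mul, abs_mul, abs_mul, hxy k]
    rcases hA _ _ hbeta with h | h
    · exact .inl (congrFun h 0)
    · exact .inr ((congrFun h 0).trans (P_mul_row_zero _))
  · intro hA X Y hXY
    obtain ⟨hsum, hdiff⟩ := beta_eq_beta_iff.1 hXY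
    have hsum := hA.TA_injective hsum
    rcases hA _ _ hdiff with hdiff | hdiff
    · exact .inl (eq_of_add_rows_eq_of_sub_rows_eq hsum hdiff)
    · refine .inr (eq_of_add_rows_eq_of_sub_rows_eq ?_ ?_) <;>
        rw [P_mul_row_zero, P_mul_row_one]
      · rw [hsum, add_comm]
      · rw [hdiff, neg_sub]

theorem IsFullSpark.columnsSpan (hA : IsFullSpark A) {S : Finset (Fin D)} (hS : d ≤ S.card) :
    ColumnsSpan A S := by
  obtain ⟨T, hTS, hT⟩ := Finset.exists_subset_card_eq hS
  intro x hx
  exact LinearIndependent.eq_zero_of_forall_dotProduct_eq_zero (hA T hT) (by simp [hT])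
    fun k => hx k (hTS k.2)

theorem not_columnsSpan_of_card_lt {S : Finset (Fin D)} (hS : S.card < d) :
    ¬ ColumnsSpan A S := by
  obtain ⟨x, hx0, hx⟩ :=
    exists_ne_zero_forall_dotProduct_eq_zero_of_card_lt (fun k : S => col A k) (by simpa using hS)
  exact fun h => hx0 (h x fun k hk => hx ⟨k, hk⟩)

theorem ColumnsSpan.linearIndependent {S : Finset (Fin D)} (h : ColumnsSpan A S)
    (hS : S.card = d) : LinearIndependent ℝ (fun k : S => col A k) :=
  linearIndependent_of_forall_dotProduct_eq_zero (by simpa using hS) fun x hx =>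
    h x fun k hk => hx ⟨k, hk⟩

theorem DoesPhaseRetrieval.hasComplementProperty (hA : DoesPhaseRetrieval A) :
    HasComplementProperty A := by
  intro S
  by_contra! h
  simp only [ColumnsSpan, not_forall, Finset.mem_compl] at h
  obtain ⟨⟨u, hu, hu0⟩, ⟨v, hv, hv0⟩⟩ := h
  have hα : alpha A (u + v) = alpha A (u - v) := by
    ext k
    simp only [alpha_eq_abs_TA, Pi.abs_apply, TA_add, TA_sub, Pi.add_apply, Pi.sub_apply]
    by_cases hk : k ∈ S
    · rw [hu k hk, zero_add, zero_sub, abs_neg]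
    · rw [hv k hk, add_zero, sub_zero]
  rcases hA _ _ hα with h | h
  · exact hv0 (self_eq_neg.1 (by linear_combination h))
  · exact hu0 (self_eq_neg.1 (by linear_combination h))

theorem HasComplementProperty.isFullSpark (hA : HasComplementProperty A) (hD : D < 2 * d) :
    IsFullSpark A := fun S hS =>
  ((hA S).resolve_right (not_columnsSpan_of_card_lt (by
    rw [Finset.card_compl, Fintype.card_fin]
    omega))).linearIndependent hS

theorem IsFullSpark.doesPhaseRetrieval (hA : IsFullSpark A) (hD : 2 * d - 1 ≤ D) :
    DoesPhaseRetrieval A := by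
  intro x y hxy
  have hsign : ∀ k, TA A x k = TA A y k ∨ TA A x k = -TA A y k := fun k =>
    abs_eq_abs.1 (by simpa only [alpha_eq_abs_TA, Pi.abs_apply] using congrFun hxy k)
  set I := Finset.univ.filter fun k => TA A x k = TA A y k
  by_cases hI : d ≤ I.card
  · refine .inl (sub_eq_zero.1 (hA.columnsSpan hI _ fun k hk => ?_))
    rw [TA_sub, Pi.sub_apply, (Finset.mem_filter.1 hk).2, sub_self]
  · have hIc : d ≤ Iᶜ.card := by
      rw [Finset.card_compl, Fintype.card_fin]
      omega
    refine .inr (eq_neg_of_add_eq_zero_left (hA.columnsSpan hIc _ fun k hk => ?_))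
    rw [TA_add, Pi.add_apply, (hsign k).resolve_left (by simpa [I] using hk), neg_add_cancel]

end Frame

/-- if `D = 2d - 1`, then `A` is a universal key iff `A` is full spark. -/
theorem universal_key_iff_full_spark
    {d D : ℕ} (hd : 1 ≤ d) (hD : D = 2 * d - 1) (A : Matrix (Fin d) (Fin D) ℝ) :
    (∀ X Y : Matrix (Fin 2) (Fin d) ℝ, beta A X = beta A Y → X = Y ∨ X = P * Y) ↔
      (∀ S : Finset (Fin D), S.card = d →
        LinearIndependent ℝ (fun i : S => col A (i : Fin D))) :=
  isUniversalKey_iff_doesPhaseRetrieval.trans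
    ⟨fun h => h.hasComplementProperty.isFullSpark (by omega),
      fun h => IsFullSpark.doesPhaseRetrieval h hD.ge⟩

end

end PR
end

section
/- Let d, D be positive integers, A ∈ ℝ^{d×D} with columns a_1, …, a_D. Suppose ω : ℝ^D → ℝ^d satisfies ω(α_A(x)) = x or ω(α_A(x)) = −x for every x ∈ ℝ^d, and B : ℝ^D → ℝ^d satisfies B(T_A(x)) = x for every x ∈ ℝ^d. Then for every X ∈ ℝ^{2×d} with rows x_1^T, x_2^T, writing r_1, r_2 ∈ ℝ^D for the two rows of β_A(X), the pair (½(B(r_1 + r_2) + ω(r_1 − r_2)), ½(B(r_1 + r_2) − ω(r_1 − r_2))) equals (x_1, x_2) or (x_2, x_1). -/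
open scoped BigOperators

namespace PR

noncomputable section

/-- inversion of `β_A` from a left inverse `ω` of `α_A` (up to sign)
and a left inverse `B` of `T_A`. -/
theorem beta_inversion
    {d D : ℕ} (hd : 0 < d) (hD : 0 < D) (A : Matrix (Fin d) (Fin D) ℝ)
    (ω : (Fin D → ℝ) → (Fin d → ℝ))
    (hω : ∀ x : Fin d → ℝ, ω (alpha A x) = x ∨ ω (alpha A x) = -x)
    (B : (Fin D → ℝ) → (Fin d → ℝ))
    (hB : ∀ x : Fin d → ℝ, B (TA A x) = x)
    (X : Matrix (Fin 2) (Fin d) ℝ) :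
    ((1 / 2 : ℝ) • (B (beta A X 0 + beta A X 1) + ω (beta A X 0 - beta A X 1)),
     (1 / 2 : ℝ) • (B (beta A X 0 + beta A X 1) - ω (beta A X 0 - beta A X 1)))
        = (X 0, X 1) ∨
    ((1 / 2 : ℝ) • (B (beta A X 0 + beta A X 1) + ω (beta A X 0 - beta A X 1)),
     (1 / 2 : ℝ) • (B (beta A X 0 + beta A X 1) - ω (beta A X 0 - beta A X 1)))
        = (X 1, X 0) := by
  have hsum : beta A X 0 + beta A X 1 = TA A (X 0 + X 1) := by
    funext k
    show max (dot (X 0) (col A k)) (dot (X 1) (col A k))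
        + min (dot (X 0) (col A k)) (dot (X 1) (col A k)) = _
    rw [max_add_min]
    simp [TA, dot, Finset.sum_add_distrib, add_mul]
  have hdiff : beta A X 0 - beta A X 1 = alpha A (X 0 - X 1) := by
    funext k
    show max (dot (X 0) (col A k)) (dot (X 1) (col A k))
        - min (dot (X 0) (col A k)) (dot (X 1) (col A k)) = _
    have hd2 : dot (X 0 - X 1) (col A k)
        = dot (X 0) (col A k) - dot (X 1) (col A k) := by
      simp [dot, Finset.sum_sub_distrib, sub_mul]
    show _ = |dot (X 0 - X 1) (col A k)|
    rw [max_sub_min_eq_abs, hd2]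
    exact abs_sub_comm _ _
  rw [hsum, hdiff, hB]
  rcases hω (X 0 - X 1) with h | h <;> rw [h] <;> [left; right] <;>
    simp only [Prod.mk.injEq] <;> constructor <;> funext i <;>
    simp only [Pi.smul_apply, Pi.add_apply, Pi.sub_apply, Pi.neg_apply, smul_eq_mul] <;> ring
end
end PR
end

section
/- Let d, D be positive integers and A ∈ ℝ^{d×D} with columns a_1, …, a_D. Then for all X, Y ∈ ℝ^{2×d}, ‖β_A(X) − β_A(Y)‖_F ≤ σ_1(A) · min(‖X − Y‖_F, ‖X − PY‖_F), where P is the 2×2 permutation matrix exchanging the two rows, ‖·‖_F is the Frobenius norm, and σ_1(A) is the operator norm of the linear map T_A(x) = (⟨x, a_k⟩)_{k=1}^D (the largest singular value of A). -/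
open scoped BigOperators

namespace PR

noncomputable section

/-! ### Auxiliary lemmas -/

lemma vnorm_nonneg {n : ℕ} (x : Fin n → ℝ) : 0 ≤ vnorm x := Real.sqrt_nonneg _

lemma sq_vnorm {n : ℕ} (x : Fin n → ℝ) : vnorm x ^ 2 = ∑ i, (x i) ^ 2 :=
  Real.sq_sqrt (Finset.sum_nonneg fun _ _ => sq_nonneg _)

lemma set_bdd {d D : ℕ} (A : Matrix (Fin d) (Fin D) ℝ) :
    BddAbove {c : ℝ | ∃ x : Fin d → ℝ, vnorm x = 1 ∧ c = vnorm (TA A x)} := by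
  refine ⟨Real.sqrt (∑ k, ∑ i, (A i k) ^ 2), ?_⟩
  rintro c ⟨x, hx, rfl⟩
  have hx2 : (∑ i, (x i) ^ 2) = 1 := by rw [← sq_vnorm, hx]; norm_num
  unfold vnorm TA dot col
  apply Real.sqrt_le_sqrt
  calc ∑ k, (∑ i, x i * A i k) ^ 2
      ≤ ∑ k, (∑ i, (x i) ^ 2) * (∑ i, (A i k) ^ 2) :=
        Finset.sum_le_sum fun k _ => Finset.sum_mul_sq_le_sq_mul_sq _ _ _
    _ = ∑ k, ∑ i, (A i k) ^ 2 := by simp [hx2]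

lemma set_nonempty {d D : ℕ} (hd : 0 < d) (A : Matrix (Fin d) (Fin D) ℝ) :
    ∃ c, c ∈ {c : ℝ | ∃ x : Fin d → ℝ, vnorm x = 1 ∧ c = vnorm (TA A x)} := by
  classical
  set e : Fin d → ℝ := fun i => if i = ⟨0, hd⟩ then (1 : ℝ) else 0 with he
  have hsq : ∀ i : Fin d, (e i) ^ 2 = if i = ⟨0, hd⟩ then (1 : ℝ) else 0 := by
    intro i; rw [he]; by_cases h : i = ⟨0, hd⟩ <;> simp [h]
  have h1 : vnorm e = 1 := by
    unfold vnorm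
    simp only [hsq, Finset.sum_ite_eq', Finset.mem_univ, if_true, Real.sqrt_one]
  exact ⟨_, e, h1, rfl⟩

lemma sigma1_nonneg {d D : ℕ} (hd : 0 < d) (A : Matrix (Fin d) (Fin D) ℝ) :
    0 ≤ sigma1 A := by
  obtain ⟨c, hc⟩ := set_nonempty hd A
  obtain ⟨x, hx, rfl⟩ := hc
  exact le_trans (vnorm_nonneg _) (le_csSup (set_bdd A) ⟨x, hx, rfl⟩)

lemma vnorm_smul {n : ℕ} (c : ℝ) (x : Fin n → ℝ) :
    vnorm (fun i => c * x i) = |c| * vnorm x := by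
  unfold vnorm
  rw [← Real.sqrt_sq_eq_abs, ← Real.sqrt_mul (sq_nonneg c), Finset.mul_sum]
  simp_rw [mul_pow]

lemma TA_smul {d D : ℕ} (A : Matrix (Fin d) (Fin D) ℝ) (c : ℝ) (u : Fin d → ℝ) :
    TA A (fun i => c * u i) = fun k => c * TA A u k := by
  funext k
  unfold TA dot
  rw [Finset.mul_sum]
  simp_rw [mul_assoc]

lemma TA_le {d D : ℕ} (hd : 0 < d) (A : Matrix (Fin d) (Fin D) ℝ) (u : Fin d → ℝ) :
    vnorm (TA A u) ≤ sigma1 A * vnorm u := by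
  rcases eq_or_lt_of_le (vnorm_nonneg u) with h | h
  · -- vnorm u = 0
    have hsum : (∑ i, (u i) ^ 2) = 0 := by rw [← sq_vnorm, ← h]; norm_num
    have hz : ∀ i, u i = 0 := by
      intro i
      have := (Finset.sum_eq_zero_iff_of_nonneg (fun i _ => sq_nonneg (u i))).1 hsum i
        (Finset.mem_univ i)
      exact (pow_eq_zero_iff two_ne_zero).1 this
    have : TA A u = fun _ => 0 := by
      funext k; unfold TA dot; exact Finset.sum_eq_zero fun i _ => by rw [hz i, zero_mul]
    rw [this, ← h, mul_zero]
    unfold vnorm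
    simp
  · set t := vnorm u with ht
    have htpos : 0 < t := h
    set v : Fin d → ℝ := fun i => t⁻¹ * u i with hv
    have hv1 : vnorm v = 1 := by
      rw [hv, vnorm_smul, abs_of_pos (inv_pos.2 htpos), ← ht, inv_mul_cancel₀ htpos.ne']
    have hTv : vnorm (TA A v) = t⁻¹ * vnorm (TA A u) := by
      rw [hv, TA_smul, vnorm_smul, abs_of_pos (inv_pos.2 htpos)]
    have hmem : vnorm (TA A v) ≤ sigma1 A := le_csSup (set_bdd A) ⟨v, hv1, rfl⟩
    rw [hTv] at hmem
    calc vnorm (TA A u) = t * (t⁻¹ * vnorm (TA A u)) := by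
          field_simp
      _ ≤ t * sigma1 A := by
          exact mul_le_mul_of_nonneg_left hmem htpos.le
      _ = sigma1 A * vnorm u := by rw [mul_comm, ht]

lemma sort_ineq (a b c d : ℝ) :
    (max a b - max c d) ^ 2 + (min a b - min c d) ^ 2 ≤ (a - c) ^ 2 + (b - d) ^ 2 := by
  rcases le_total a b with h1 | h1 <;> rcases le_total c d with h2 | h2 <;>
    simp [max_eq_right, max_eq_left, min_eq_left, min_eq_right, h1, h2] <;>
    nlinarith [mul_nonneg (sub_nonneg.2 h1) (sub_nonneg.2 h2)]

lemma beta_swap {d D : ℕ} (A : Matrix (Fin d) (Fin D) ℝ) (Y : Matrix (Fin 2) (Fin d) ℝ) :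
    beta A (P * Y) = beta A Y := by
  have h0 : (P * Y) 0 = Y 1 := by
    funext j; simp [P, Matrix.mul_apply, Fin.sum_univ_two]
  have h1 : (P * Y) 1 = Y 0 := by
    funext j; simp [P, Matrix.mul_apply, Fin.sum_univ_two]
  unfold beta
  rw [h0, h1]
  ext j k
  simp [max_comm, min_comm]

lemma beta_lip {d D : ℕ} (hd : 0 < d) (A : Matrix (Fin d) (Fin D) ℝ)
    (X Y : Matrix (Fin 2) (Fin d) ℝ) :
    fnorm (beta A X - beta A Y) ≤ sigma1 A * fnorm (X - Y) := by
  have hσ := sigma1_nonneg hd A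
  set u0 : Fin d → ℝ := fun j => X 0 j - Y 0 j with hu0
  set u1 : Fin d → ℝ := fun j => X 1 j - Y 1 j with hu1
  have hdot0 : ∀ k, dot (X 0) (col A k) - dot (Y 0) (col A k) = TA A u0 k := by
    intro k; unfold TA dot
    rw [← Finset.sum_sub_distrib]
    exact Finset.sum_congr rfl fun i _ => by rw [hu0]; ring
  have hdot1 : ∀ k, dot (X 1) (col A k) - dot (Y 1) (col A k) = TA A u1 k := by
    intro k; unfold TA dot
    rw [← Finset.sum_sub_distrib]
    exact Finset.sum_congr rfl fun i _ => by rw [hu1]; ring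
  have key : (∑ i, ∑ k, ((beta A X - beta A Y) i k) ^ 2)
      ≤ (sigma1 A) ^ 2 * ∑ i, ∑ j, ((X - Y) i j) ^ 2 := by
    have lhs_eq : (∑ i, ∑ k, ((beta A X - beta A Y) i k) ^ 2)
        = ∑ k, (((beta A X - beta A Y) 0 k) ^ 2 + ((beta A X - beta A Y) 1 k) ^ 2) := by
      rw [Fin.sum_univ_two, ← Finset.sum_add_distrib]
    rw [lhs_eq]
    have step1 : ∑ k, (((beta A X - beta A Y) 0 k) ^ 2 + ((beta A X - beta A Y) 1 k) ^ 2)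
        ≤ ∑ k, ((TA A u0 k) ^ 2 + (TA A u1 k) ^ 2) := by
      refine Finset.sum_le_sum fun k _ => ?_
      have e0 : (beta A X - beta A Y) 0 k
          = max (dot (X 0) (col A k)) (dot (X 1) (col A k))
            - max (dot (Y 0) (col A k)) (dot (Y 1) (col A k)) := by
        simp [beta, Matrix.sub_apply]
      have e1 : (beta A X - beta A Y) 1 k
          = min (dot (X 0) (col A k)) (dot (X 1) (col A k))
            - min (dot (Y 0) (col A k)) (dot (Y 1) (col A k)) := by
        simp [beta, Matrix.sub_apply]
      rw [e0, e1, ← hdot0 k, ← hdot1 k]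
      exact sort_ineq _ _ _ _
    have step2 : ∑ k, ((TA A u0 k) ^ 2 + (TA A u1 k) ^ 2)
        ≤ (sigma1 A) ^ 2 * ∑ i, ∑ j, ((X - Y) i j) ^ 2 := by
      rw [Finset.sum_add_distrib]
      have h0 : (∑ k, (TA A u0 k) ^ 2) ≤ (sigma1 A) ^ 2 * ∑ j, (u0 j) ^ 2 := by
        have := TA_le hd A u0
        have hsq := pow_le_pow_left₀ (vnorm_nonneg _) this 2
        rw [mul_pow, sq_vnorm, sq_vnorm] at hsq
        exact hsq
      have h1 : (∑ k, (TA A u1 k) ^ 2) ≤ (sigma1 A) ^ 2 * ∑ j, (u1 j) ^ 2 := by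
        have := TA_le hd A u1
        have hsq := pow_le_pow_left₀ (vnorm_nonneg _) this 2
        rw [mul_pow, sq_vnorm, sq_vnorm] at hsq
        exact hsq
      have rhs_eq : (sigma1 A) ^ 2 * ∑ i, ∑ j, ((X - Y) i j) ^ 2
          = (sigma1 A) ^ 2 * ∑ j, (u0 j) ^ 2 + (sigma1 A) ^ 2 * ∑ j, (u1 j) ^ 2 := by
        rw [Fin.sum_univ_two, mul_add]
        simp [Matrix.sub_apply, hu0, hu1]
      rw [rhs_eq]
      exact add_le_add h0 h1
    exact le_trans step1 step2
  calc fnorm (beta A X - beta A Y)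
      ≤ Real.sqrt ((sigma1 A) ^ 2 * ∑ i, ∑ j, ((X - Y) i j) ^ 2) := Real.sqrt_le_sqrt key
    _ = sigma1 A * fnorm (X - Y) := by
        rw [Real.sqrt_mul (sq_nonneg _), Real.sqrt_sq hσ]; rfl

/-- `σ₁(A)` is an upper Lipschitz bound for `β_A` w.r.t. the quotient
distance `min(‖X-Y‖_F, ‖X-PY‖_F)`. -/
theorem beta_upper_lipschitz
    {d D : ℕ} (hd : 0 < d) (hD : 0 < D) (A : Matrix (Fin d) (Fin D) ℝ) :
    ∀ X Y : Matrix (Fin 2) (Fin d) ℝ,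
      fnorm (beta A X - beta A Y) ≤
        sigma1 A * min (fnorm (X - Y)) (fnorm (X - P * Y)) := by
  intro X Y
  have hσ := sigma1_nonneg hd A
  rw [mul_min_of_nonneg _ _ hσ]
  refine le_min (beta_lip hd A X Y) ?_
  calc fnorm (beta A X - beta A Y)
      = fnorm (beta A X - beta A (P * Y)) := by rw [beta_swap]
    _ ≤ sigma1 A * fnorm (X - P * Y) := beta_lip hd A X (P * Y)

end

end PR
end

section
/- Let d, D be positive integers and A ∈ ℝ^{d×D} with columns a_1, …, a_D. Let u ∈ ℝ^d be a unit vector with ‖T_A(u)‖ = σ_1(A), where σ_1(A) is the operator norm of T_A(x) = (⟨x, a_k⟩)_{k=1}^D. Let X ∈ ℝ^{2×d} have first row u^T and second row 0, and Y = 0 ∈ ℝ^{2×d}. Then ‖β_A(X) − β_A(Y)‖_F = σ_1(A) and min(‖X − Y‖_F, ‖X − PY‖_F) = 1 (P exchanging rows), so the upper Lipschitz constant σ_1(A) of β_A is achieved. -/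
open scoped BigOperators

namespace PR

noncomputable section

/-- the upper Lipschitz constant `σ₁(A)` of `β_A` is achieved at
`X = [uᵀ; 0]` and `Y = 0`. -/
theorem beta_upper_lipschitz_achieved
    {d D : ℕ} (hd : 0 < d) (hD : 0 < D) (A : Matrix (Fin d) (Fin D) ℝ)
    (u : Fin d → ℝ) (hu : vnorm u = 1) (hTu : vnorm (TA A u) = sigma1 A) :
    fnorm (beta A (Matrix.of ![u, 0]) - beta A (0 : Matrix (Fin 2) (Fin d) ℝ)) = sigma1 A ∧
      min (fnorm ((Matrix.of ![u, 0] : Matrix (Fin 2) (Fin d) ℝ) - 0))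
          (fnorm ((Matrix.of ![u, 0] : Matrix (Fin 2) (Fin d) ℝ) - P * (0 : Matrix (Fin 2) (Fin d) ℝ))) = 1 := by
  have hX0 : (Matrix.of ![u, 0] : Matrix (Fin 2) (Fin d) ℝ) 0 = u := rfl
  have hX1 : (Matrix.of ![u, 0] : Matrix (Fin 2) (Fin d) ℝ) 1 = 0 := rfl
  have hdot0 : ∀ k, dot (0 : Fin d → ℝ) (col A k) = 0 := by
    intro k; simp [dot]
  have key : ∀ t : ℝ, (max t 0) ^ 2 + (min t 0) ^ 2 = t ^ 2 := by
    intro t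
    rcases le_total t 0 with h | h
    · rw [max_eq_right h, min_eq_left h]; ring
    · rw [max_eq_left h, min_eq_right h]; ring
  constructor
  · have : fnorm (beta A (Matrix.of ![u, 0]) - beta A (0 : Matrix (Fin 2) (Fin d) ℝ))
        = vnorm (TA A u) := by
      unfold fnorm vnorm
      congr 1
      rw [Fin.sum_univ_two, ← Finset.sum_add_distrib]
      apply Finset.sum_congr rfl
      intro k _
      have hz : ∀ j : Fin 2, (0 : Matrix (Fin 2) (Fin d) ℝ) j = 0 := fun j => rfl
      simp only [beta, Matrix.sub_apply, Matrix.of_apply, hz, hX0, hX1, hdot0,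
        max_self, min_self, sub_zero, TA]
      simpa using key (dot u (col A k))
    rw [this, hTu]
  · have h0 : P * (0 : Matrix (Fin 2) (Fin d) ℝ) = 0 := by simp
    rw [h0, sub_zero, min_self]
    unfold fnorm
    rw [Fin.sum_univ_two]
    have : ∀ j, (Matrix.of ![u, 0] : Matrix (Fin 2) (Fin d) ℝ) 1 j = 0 := fun j => rfl
    simp only [hX0, hX1, Pi.zero_apply, Matrix.of_apply]
    rw [← hu]
    unfold vnorm
    congr 1
    simp


end

end PR
end

section
/- Let d, D be positive integers and A ∈ ℝ^{d×D} with columns a_1, …, a_D. For I ⊆ {1,…,D}, let λ(I) = inf { Σ_{i∈I} ⟨u, a_i⟩² : ‖u‖ = 1 } and A_0² = min_I (λ(I) + λ(I^c)). Then for all X, Y ∈ ℝ^{2×d}, ‖β_A(X) − β_A(Y)‖_F² ≥ A_0² · min(‖X − Y‖_F, ‖X − PY‖_F)², where P is the 2×2 permutation matrix exchanging the two rows. -/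
open scoped BigOperators

namespace PR

noncomputable section

lemma lam_nonneg {d D : ℕ} (A : Matrix (Fin d) (Fin D) ℝ) (I : Finset (Fin D)) :
    0 ≤ lam A I := by
  apply Real.sInf_nonneg
  rintro c ⟨u, -, rfl⟩
  positivity

lemma dot_smul' {d : ℕ} (c : ℝ) (x a : Fin d → ℝ) :
    dot (fun i => c * x i) a = c * dot x a := by
  simp [dot, Finset.mul_sum, mul_assoc]

lemma lam_mul_le {d D : ℕ} (A : Matrix (Fin d) (Fin D) ℝ) (I : Finset (Fin D))
    (u : Fin d → ℝ) :
    lam A I * (∑ i, u i ^ 2) ≤ ∑ k ∈ I, (dot u (col A k)) ^ 2 := by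
  set s := ∑ i, u i ^ 2 with hs
  have hs0 : 0 ≤ s := by positivity
  rcases eq_or_lt_of_le hs0 with h | h
  · have hu : ∀ i, dot u (col A i) = 0 := by
      intro i
      have hz : ∀ j ∈ Finset.univ, u j ^ 2 = 0 :=
        (Finset.sum_eq_zero_iff_of_nonneg (fun j _ => sq_nonneg (u j))).mp h.symm
      have hzz : ∀ j, u j = 0 := fun j => by
        have := hz j (Finset.mem_univ j); nlinarith [this]
      simp [dot, hzz]
    calc lam A I * s = 0 := by rw [← h, mul_zero]
    _ ≤ ∑ k ∈ I, (dot u (col A k)) ^ 2 := by positivity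
  · set c : ℝ := (Real.sqrt s)⁻¹ with hc
    have hsq : (0:ℝ) < Real.sqrt s := Real.sqrt_pos.mpr h
    have hc2 : c ^ 2 = s⁻¹ := by
      rw [hc, inv_pow, Real.sq_sqrt hs0]
    have hunit : vnorm (fun i => c * u i) = 1 := by
      have : (∑ i, (c * u i) ^ 2) = c ^ 2 * s := by
        rw [hs, Finset.mul_sum]; congr 1; ext i; ring
      rw [vnorm, this, hc2, inv_mul_cancel₀ (ne_of_gt h), Real.sqrt_one]
    have hbdd : BddBelow {c : ℝ | ∃ u : Fin d → ℝ,
        vnorm u = 1 ∧ c = ∑ i ∈ I, (dot u (col A i)) ^ 2} := by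
      refine ⟨0, ?_⟩
      rintro x ⟨v, -, rfl⟩
      positivity
    have hmem : (∑ k ∈ I, (dot (fun i => c * u i) (col A k)) ^ 2) ∈
        {c : ℝ | ∃ u : Fin d → ℝ, vnorm u = 1 ∧ c = ∑ i ∈ I, (dot u (col A i)) ^ 2} :=
      ⟨_, hunit, rfl⟩
    have hle := csInf_le hbdd hmem
    have heq : (∑ k ∈ I, (dot (fun i => c * u i) (col A k)) ^ 2)
        = s⁻¹ * ∑ k ∈ I, (dot u (col A k)) ^ 2 := by
      rw [← hc2, Finset.mul_sum]; congr 1; ext k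
      rw [dot_smul']; ring
    rw [heq] at hle
    have := mul_le_mul_of_nonneg_right hle (le_of_lt h)
    calc lam A I * s ≤ s⁻¹ * (∑ k ∈ I, (dot u (col A k)) ^ 2) * s := this
    _ = ∑ k ∈ I, (dot u (col A k)) ^ 2 := by
        field_simp

lemma sorted_key (a b e f : ℝ) :
    min ((a - e) ^ 2 + (b - f) ^ 2) ((a - f) ^ 2 + (b - e) ^ 2) ≤
      (max a b - max e f) ^ 2 + (min a b - min e f) ^ 2 := by
  rcases le_total a b with h1 | h1 <;> rcases le_total e f with h2 | h2
  · rw [max_eq_right h1, max_eq_right h2, min_eq_left h1, min_eq_left h2]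
    exact (min_le_left _ _).trans_eq (by ring)
  · rw [max_eq_right h1, max_eq_left h2, min_eq_left h1, min_eq_right h2]
    exact (min_le_right _ _).trans_eq (by ring)
  · rw [max_eq_left h1, max_eq_right h2, min_eq_right h1, min_eq_left h2]
    exact (min_le_right _ _).trans_eq (by ring)
  · rw [max_eq_left h1, max_eq_left h2, min_eq_right h1, min_eq_right h2]
    exact (min_le_left _ _).trans_eq (by ring)

lemma fnorm_sq {n : ℕ} (X : Matrix (Fin 2) (Fin n) ℝ) :
    fnorm X ^ 2 = (∑ j, X 0 j ^ 2) + (∑ j, X 1 j ^ 2) := by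
  rw [fnorm, Real.sq_sqrt (by positivity), Fin.sum_univ_two]

lemma fnorm_nonneg' {n : ℕ} (X : Matrix (Fin 2) (Fin n) ℝ) : 0 ≤ fnorm X :=
  Real.sqrt_nonneg _

/-- `A₀` is a lower Lipschitz bound for `β_A` w.r.t. the quotient
distance `min(‖X-Y‖_F, ‖X-PY‖_F)`. -/
theorem beta_lower_lipschitz
    {d D : ℕ} (hd : 0 < d) (hD : 0 < D) (A : Matrix (Fin d) (Fin D) ℝ) :
    ∀ X Y : Matrix (Fin 2) (Fin d) ℝ,
      (fnorm (beta A X - beta A Y)) ^ 2 ≥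
        A0sq A * (min (fnorm (X - Y)) (fnorm (X - P * Y))) ^ 2 := by
  intro X Y
  -- difference vectors
  set u : Fin d → ℝ := fun j => X 0 j - Y 0 j with hu
  set v : Fin d → ℝ := fun j => X 1 j - Y 1 j with hv
  set u' : Fin d → ℝ := fun j => X 0 j - Y 1 j with hu'
  set v' : Fin d → ℝ := fun j => X 1 j - Y 0 j with hv'
  -- the index set
  set e1 : Fin D → ℝ := fun k => (dot u (col A k)) ^ 2 + (dot v (col A k)) ^ 2 with he1
  set e2 : Fin D → ℝ := fun k => (dot u' (col A k)) ^ 2 + (dot v' (col A k)) ^ 2 with he2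
  set I : Finset (Fin D) := Finset.univ.filter (fun k => e1 k ≤ e2 k) with hI
  -- dot linearity
  have dot_sub : ∀ (x y a : Fin d → ℝ), dot (fun i => x i - y i) a = dot x a - dot y a := by
    intro x y a
    simp [dot, sub_mul, Finset.sum_sub_distrib]
  -- per-column bound
  have hcol : ∀ k : Fin D,
      min (e1 k) (e2 k) ≤
        ((beta A X - beta A Y) 0 k) ^ 2 + ((beta A X - beta A Y) 1 k) ^ 2 := by
    intro k
    have hb0 : (beta A X - beta A Y) 0 k =
        max (dot (X 0) (col A k)) (dot (X 1) (col A k)) -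
          max (dot (Y 0) (col A k)) (dot (Y 1) (col A k)) := by
      simp [beta, Matrix.sub_apply]
    have hb1 : (beta A X - beta A Y) 1 k =
        min (dot (X 0) (col A k)) (dot (X 1) (col A k)) -
          min (dot (Y 0) (col A k)) (dot (Y 1) (col A k)) := by
      simp [beta, Matrix.sub_apply]
    have hud : dot u (col A k) = dot (X 0) (col A k) - dot (Y 0) (col A k) := dot_sub _ _ _
    have hvd : dot v (col A k) = dot (X 1) (col A k) - dot (Y 1) (col A k) := dot_sub _ _ _
    have hud' : dot u' (col A k) = dot (X 0) (col A k) - dot (Y 1) (col A k) := dot_sub _ _ _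
    have hvd' : dot v' (col A k) = dot (X 1) (col A k) - dot (Y 0) (col A k) := dot_sub _ _ _
    rw [hb0, hb1, he1, he2]
    simp only [hud, hvd, hud', hvd']
    exact sorted_key _ _ _ _
  -- norms of differences
  have hXY : fnorm (X - Y) ^ 2 = (∑ j, u j ^ 2) + (∑ j, v j ^ 2) := by
    rw [fnorm_sq]
    simp [hu, hv, Matrix.sub_apply]
  have hPY0 : ∀ j, (P * Y) 0 j = Y 1 j := by
    intro j
    rw [Matrix.mul_apply, Fin.sum_univ_two]
    simp [P]
  have hPY1 : ∀ j, (P * Y) 1 j = Y 0 j := by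
    intro j
    rw [Matrix.mul_apply, Fin.sum_univ_two]
    simp [P]
  have hXPY : fnorm (X - P * Y) ^ 2 = (∑ j, u' j ^ 2) + (∑ j, v' j ^ 2) := by
    rw [fnorm_sq]
    simp [hu', hv', Matrix.sub_apply, hPY0, hPY1]
  -- total sum bound
  have hsum : lam A I * fnorm (X - Y) ^ 2 + lam A Iᶜ * fnorm (X - P * Y) ^ 2 ≤
      fnorm (beta A X - beta A Y) ^ 2 := by
    have htot : fnorm (beta A X - beta A Y) ^ 2 =
        ∑ k, (((beta A X - beta A Y) 0 k) ^ 2 + ((beta A X - beta A Y) 1 k) ^ 2) := by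
      rw [fnorm_sq, ← Finset.sum_add_distrib]
    have hsplit : (∑ k ∈ I, e1 k) + (∑ k ∈ Iᶜ, e2 k) ≤
        ∑ k, (((beta A X - beta A Y) 0 k) ^ 2 + ((beta A X - beta A Y) 1 k) ^ 2) := by
      have h1 : ∀ k ∈ I, e1 k ≤ ((beta A X - beta A Y) 0 k) ^ 2 +
          ((beta A X - beta A Y) 1 k) ^ 2 := by
        intro k hk
        have hle : e1 k ≤ e2 k := (Finset.mem_filter.mp hk).2
        have := hcol k
        rwa [min_eq_left hle] at this
      have h2 : ∀ k ∈ Iᶜ, e2 k ≤ ((beta A X - beta A Y) 0 k) ^ 2 +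
          ((beta A X - beta A Y) 1 k) ^ 2 := by
        intro k hk
        have hk' : ¬ (e1 k ≤ e2 k) := by
          intro hcon
          exact (Finset.mem_compl.mp hk) (Finset.mem_filter.mpr ⟨Finset.mem_univ k, hcon⟩)
        have hle : e2 k ≤ e1 k := le_of_not_ge hk'
        have := hcol k
        rwa [min_eq_right hle] at this
      calc (∑ k ∈ I, e1 k) + (∑ k ∈ Iᶜ, e2 k)
          ≤ (∑ k ∈ I, (((beta A X - beta A Y) 0 k) ^ 2 + ((beta A X - beta A Y) 1 k) ^ 2))
            + (∑ k ∈ Iᶜ, (((beta A X - beta A Y) 0 k) ^ 2 + ((beta A X - beta A Y) 1 k) ^ 2)) :=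
            add_le_add (Finset.sum_le_sum h1) (Finset.sum_le_sum h2)
        _ = ∑ k, (((beta A X - beta A Y) 0 k) ^ 2 + ((beta A X - beta A Y) 1 k) ^ 2) :=
            Finset.sum_add_sum_compl I _
    have hlam1 : lam A I * fnorm (X - Y) ^ 2 ≤ ∑ k ∈ I, e1 k := by
      rw [hXY, mul_add, he1]
      rw [Finset.sum_add_distrib]
      exact add_le_add (lam_mul_le A I u) (lam_mul_le A I v)
    have hlam2 : lam A Iᶜ * fnorm (X - P * Y) ^ 2 ≤ ∑ k ∈ Iᶜ, e2 k := by
      rw [hXPY, mul_add, he2]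
      rw [Finset.sum_add_distrib]
      exact add_le_add (lam_mul_le A Iᶜ u') (lam_mul_le A Iᶜ v')
    rw [htot]
    exact le_trans (add_le_add hlam1 hlam2) hsplit
  -- A0sq bound
  have hA0 : A0sq A ≤ lam A I + lam A Iᶜ := by
    apply csInf_le
    · refine ⟨0, ?_⟩
      rintro x ⟨J, rfl⟩
      have := lam_nonneg A J
      have := lam_nonneg A Jᶜ
      linarith
    · exact ⟨I, rfl⟩
  -- combine
  set m := min (fnorm (X - Y)) (fnorm (X - P * Y)) with hm
  have hm0 : 0 ≤ m := le_min (fnorm_nonneg' _) (fnorm_nonneg' _)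
  have hm1 : m ^ 2 ≤ fnorm (X - Y) ^ 2 :=
    pow_le_pow_left₀ hm0 (min_le_left _ _) 2
  have hm2 : m ^ 2 ≤ fnorm (X - P * Y) ^ 2 :=
    pow_le_pow_left₀ hm0 (min_le_right _ _) 2
  have hl1 := lam_nonneg A I
  have hl2 := lam_nonneg A Iᶜ
  have hm0' : 0 ≤ m ^ 2 := sq_nonneg m
  calc A0sq A * m ^ 2 ≤ (lam A I + lam A Iᶜ) * m ^ 2 :=
        mul_le_mul_of_nonneg_right hA0 hm0'
    _ = lam A I * m ^ 2 + lam A Iᶜ * m ^ 2 := by ring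
    _ ≤ lam A I * fnorm (X - Y) ^ 2 + lam A Iᶜ * fnorm (X - P * Y) ^ 2 :=
        add_le_add (mul_le_mul_of_nonneg_left hm1 hl1) (mul_le_mul_of_nonneg_left hm2 hl2)
    _ ≤ fnorm (beta A X - beta A Y) ^ 2 := hsum

end

end PR
end
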